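/- arXiv:2406.14244 — 2 statements merged into one kernel-verified Lean document; each statement's English description precedes it below -/
import Mathlib

section
/- Let M be a simple matroid such that for every circuit C either cl(C) = C or there exists f ∈ cl(C) \ C with C ∪ {f} a double circuit of degree 3. Then {C ∈ 𝒞 : cl(C) = C} is the unique minimal tropical basis of M. -/
open Set

namespace TropicalPaper

variable {α : Type*}

/-- A circuit of a matroid is a minimal dependent set. -/
def Circuit (M : Matroid α) (C : Set α) : Prop := Minimal M.Dep C

/-- A matroid is simple if every circuit has at least 3 elements
(equivalently: no loops and no parallel pairs). -/
def Simple (M : Matroid α) : Prop := ∀ C, Circuit M C → 3 ≤ C.ncard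

/-- A set `𝒞'` of circuits of `M` is a tropical basis if for every non-closed
set `X` there is `C ∈ 𝒞'` with `|C \ X| = 1`. -/
def TropicalBasis (M : Matroid α) (𝒞' : Set (Set α)) : Prop :=
  (∀ C ∈ 𝒞', Circuit M C) ∧
  ∀ X ⊆ M.E, M.closure X ≠ X → ∃ C ∈ 𝒞', (C \ X).ncard = 1

/-- A tropical basis is minimal if no circuit can be removed from it. -/
def MinimalTropicalBasis (M : Matroid α) (𝒞' : Set (Set α)) : Prop :=
  TropicalBasis M 𝒞' ∧ ∀ C ∈ 𝒞', ¬ TropicalBasis M (𝒞' \ {C})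

/-- `A` is orthogonal to a family `𝒟` if `|A ∩ D| ≠ 1` for all `D ∈ 𝒟`. -/
def Orthogonal (A : Set α) (𝒟 : Set (Set α)) : Prop :=
  ∀ D ∈ 𝒟, (A ∩ D).ncard ≠ 1

/-- The rank of a set: the maximal cardinality of an independent subset. -/
noncomputable def rk (M : Matroid α) (X : Set α) : ℕ :=
  sSup {n | ∃ I, I ⊆ X ∧ M.Indep I ∧ I.ncard = n}

/-- `D` is a double circuit if `rank D = |D| - 2 = rank (D \ {e})` for all `e ∈ D`. -/
def DoubleCircuit (M : Matroid α) (D : Set α) : Prop :=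
  D ⊆ M.E ∧ D.Finite ∧
    ∀ e ∈ D, rk M D = D.ncard - 2 ∧ rk M (D \ {e}) = D.ncard - 2

/-- `P` is the canonical partition of the double circuit `D`: a partition of `D`
into nonempty parts whose complements within `D` are exactly the circuits contained
in `D`. The degree of the double circuit is the number of parts of `P`. -/
def DCPartition (M : Matroid α) (D : Set α) (P : Set (Set α)) : Prop :=
  (∀ p ∈ P, p.Nonempty) ∧ (∀ p ∈ P, p ⊆ D) ∧ P.PairwiseDisjoint id ∧
    ⋃₀ P = D ∧ ∀ C, (Circuit M C ∧ C ⊆ D) ↔ ∃ p ∈ P, C = D \ p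

/-- A matroid is binary iff the symmetric difference of any two distinct circuits
contains a circuit. -/
def Binary (M : Matroid α) : Prop :=
  ∀ C₁ C₂, Circuit M C₁ → Circuit M C₂ → C₁ ≠ C₂ →
    ∃ C, C ⊆ (C₁ \ C₂) ∪ (C₂ \ C₁) ∧ Circuit M C


section Aux

variable {M : Matroid α} {C D X : Set α} {e f : α}

lemma Circuit.dep (hC : Circuit M C) : M.Dep C := hC.1

lemma Circuit.subset_ground (hC : Circuit M C) : C ⊆ M.E := hC.1.2

lemma Circuit.eq_of_dep_subset (hC : Circuit M C) (hD : M.Dep D) (hDC : D ⊆ C) : D = C :=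
  hDC.antisymm (hC.2 hD hDC)

lemma Circuit.diff_singleton_indep (hC : Circuit M C) (he : e ∈ C) : M.Indep (C \ {e}) := by
  by_contra hi
  have hdep : M.Dep (C \ {e}) := ⟨hi, diff_subset.trans hC.subset_ground⟩
  have := hC.eq_of_dep_subset hdep diff_subset
  exact (this ▸ (fun h => h.2 rfl) : e ∉ C) he

lemma Circuit.mem_closure_diff_singleton (hC : Circuit M C) (he : e ∈ C) :
    e ∈ M.closure (C \ {e}) := by
  have hI := hC.diff_singleton_indep he
  rw [hI.mem_closure_iff]
  left
  rw [insert_diff_singleton, insert_eq_of_mem he]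
  exact hC.dep

lemma Circuit.closure_diff_singleton (hC : Circuit M C) (he : e ∈ C) :
    M.closure (C \ {e}) = M.closure C :=
  Matroid.closure_diff_singleton_eq_closure (hC.mem_closure_diff_singleton he)

lemma exists_circuit_subset (hD : M.Dep D) (hfin : D.Finite) : ∃ C ⊆ D, Circuit M C := by
  obtain ⟨C, hCmem, hCmin⟩ := Set.Finite.exists_minimalFor id {A | A ⊆ D ∧ M.Dep A}
    (hfin.finite_subsets.subset (fun A hA => hA.1)) ⟨D, subset_rfl, hD⟩
  refine ⟨C, hCmem.1, hCmem.2, fun Y hY hYC => ?_⟩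
  exact hCmin ⟨hYC.trans hCmem.1, hY⟩ hYC

lemma exists_circuit_of_not_closed [M.Finite] (hX : X ⊆ M.E) (h : M.closure X ≠ X) :
    ∃ C e, Circuit M C ∧ e ∉ X ∧ C \ X = {e} := by
  obtain ⟨e, heCl, heX⟩ : ∃ e, e ∈ M.closure X ∧ e ∉ X := by
    by_contra hc
    push_neg at hc
    exact h ((M.subset_closure X hX).antisymm' hc)
  obtain ⟨I, hI⟩ := M.exists_isBasis X hX
  have heI : e ∈ M.closure I := by rwa [hI.closure_eq_closure]
  have hdep : M.Dep (insert e I) := by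
    rw [hI.indep.insert_dep_iff]
    exact ⟨heI, fun hmem => heX (hI.subset hmem)⟩
  obtain ⟨C, hCsub, hC⟩ := exists_circuit_subset hdep
    ((M.ground_finite.subset hX).subset hI.subset |>.insert e)
  have heC : e ∈ C := by
    by_contra heC
    exact hC.dep.1 (hI.indep.subset (fun x hx => ((hCsub hx).resolve_left (fun h' => heC (h' ▸ hx)))))
  refine ⟨C, e, hC, heX, ?_⟩
  apply Subset.antisymm
  · intro x hx
    rcases hCsub hx.1 with h' | h'
    · exact h'
    · exact absurd (hI.subset h') hx.2
  · exact singleton_subset_iff.mpr ⟨heC, heX⟩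

lemma key [M.Finite] (hM : Simple M) {X C p₂ p₃ : Set α} {e f : α}
    (hC : Circuit M C) (hCX : C \ X = {e})
    (hmin : ∀ C', Circuit M C' → (C' \ X).ncard = 1 → C.ncard ≤ C'.ncard)
    (hfC : f ∉ C)
    (hp3 : p₃.Nonempty)
    (hdisj : Disjoint p₂ p₃) (hunion : p₂ ∪ p₃ = C) (hep : e ∈ p₂)
    (hC2 : Circuit M ((C ∪ {f}) \ p₂)) (hC3 : Circuit M ((C ∪ {f}) \ p₃)) : False := by
  have hCfin : C.Finite := M.ground_finite.subset hC.subset_ground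
  have hp2sub : p₂ ⊆ C := hunion ▸ subset_union_left
  have hp3sub : p₃ ⊆ C := hunion ▸ subset_union_right
  have hp2fin : p₂.Finite := hCfin.subset hp2sub
  have hp3fin : p₃.Finite := hCfin.subset hp3sub
  have hfp2 : f ∉ p₂ := fun hx => hfC (hp2sub hx)
  have hfp3 : f ∉ p₃ := fun hx => hfC (hp3sub hx)
  have heC : e ∈ C := hp2sub hep
  have heX : e ∉ X := by
    have : e ∈ C \ X := hCX ▸ rfl
    exact this.2
  have hCcard : C.ncard = p₂.ncard + p₃.ncard := by
    rw [← hunion, ncard_union_eq hdisj hp2fin hp3fin]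
  have hD2 : (C ∪ {f}) \ p₂ = insert f p₃ := by
    rw [← hunion]
    ext x
    simp only [mem_diff, mem_union, mem_insert_iff, mem_singleton_iff]
    constructor
    · rintro ⟨h1 | h1, h2⟩
      · exact Or.inr (h1.resolve_left h2)
      · exact Or.inl h1
    · rintro (rfl | hx)
      · exact ⟨Or.inr rfl, hfp2⟩
      · exact ⟨Or.inl (Or.inr hx), fun hx2 => (hdisj.ne_of_mem hx2 hx) rfl⟩
  have hD3 : (C ∪ {f}) \ p₃ = insert f p₂ := by
    rw [← hunion]
    ext x
    simp only [mem_diff, mem_union, mem_insert_iff, mem_singleton_iff]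
    constructor
    · rintro ⟨h1 | h1, h2⟩
      · exact Or.inr (h1.resolve_right h2)
      · exact Or.inl h1
    · rintro (rfl | hx)
      · exact ⟨Or.inr rfl, hfp3⟩
      · exact ⟨Or.inl (Or.inl hx), fun hx2 => (hdisj.ne_of_mem hx hx2) rfl⟩
  rw [hD2] at hC2
  rw [hD3] at hC3
  by_cases hfX : f ∈ X
  · have h3X : (insert f p₂) \ X = {e} := by
      apply Subset.antisymm
      · rintro x ⟨hx1, hx2⟩
        rcases hx1 with rfl | hx1
        · exact absurd hfX hx2
        · exact hCX ▸ ⟨hp2sub hx1, hx2⟩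
      · exact singleton_subset_iff.mpr ⟨Or.inr hep, heX⟩
    have hle := hmin _ hC3 (by rw [h3X]; simp)
    rw [ncard_insert_of_notMem hfp2 hp2fin, hCcard] at hle
    have hp3card : p₃.ncard = 1 := by
      have : 1 ≤ p₃.ncard := (ncard_pos hp3fin).mpr hp3
      omega
    obtain ⟨g, hg⟩ := ncard_eq_one.mp hp3card
    have hfg : f ≠ g := by
      rintro rfl
      rw [hg] at hfp3
      exact hfp3 rfl
    have := hM _ hC2
    rw [hg, ← Set.singleton_union, Set.union_singleton] at this
    rw [show ({g, f} : Set α).ncard = 2 from ncard_pair (Ne.symm hfg)] at this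
    omega
  · have hp3X : p₃ ⊆ X := by
      intro x hx
      by_contra hxX
      have : x ∈ C \ X := ⟨hp3sub hx, hxX⟩
      rw [hCX] at this
      exact (hdisj.ne_of_mem hep hx) this.symm
    have h2X : (insert f p₃) \ X = {f} := by
      apply Subset.antisymm
      · rintro x ⟨hx1, hx2⟩
        rcases hx1 with rfl | hx1
        · rfl
        · exact absurd (hp3X hx1) hx2
      · exact singleton_subset_iff.mpr ⟨Or.inl rfl, hfX⟩
    have hle := hmin _ hC2 (by rw [h2X]; simp)
    rw [ncard_insert_of_notMem hfp3 hp3fin, hCcard] at hle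
    have hp2card : p₂.ncard = 1 := by
      have : 1 ≤ p₂.ncard := (ncard_pos hp2fin).mpr ⟨e, hep⟩
      omega
    have hp2eq : p₂ = {e} := by
      obtain ⟨g, hg⟩ := ncard_eq_one.mp hp2card
      rw [hg] at hep ⊢
      rw [← hep]
    have hfe : f ≠ e := fun hfe => hfC (hfe ▸ heC)
    have := hM _ hC3
    rw [hp2eq] at this
    rw [show (insert f {e} : Set α).ncard = 2 from ncard_pair hfe] at this
    omega

lemma three_parts {s : Set (Set α)} {a : Set α} (h3 : s.ncard = 3) (ha : a ∈ s) :
    ∃ b c, b ≠ c ∧ a ≠ b ∧ a ≠ c ∧ s = {a, b, c} := by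
  obtain ⟨x, y, z, hxy, hxz, hyz, rfl⟩ := Set.ncard_eq_three.mp h3
  simp only [mem_insert_iff, mem_singleton_iff] at ha
  rcases ha with rfl | rfl | rfl
  · exact ⟨y, z, hyz, hxy, hxz, rfl⟩
  · refine ⟨x, z, hxz, hxy.symm, hyz, ?_⟩
    ext t; simp only [mem_insert_iff, mem_singleton_iff]; tauto
  · refine ⟨x, y, hxy, hxz.symm, hyz.symm, ?_⟩
    ext t; simp only [mem_insert_iff, mem_singleton_iff]; tauto

/-- Uses the degree-3 double circuit hypothesis: the closed circuits form a tropical basis. -/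
lemma closed_tb [M.Finite] (hM : Simple M)
    (h : ∀ C, Circuit M C → M.closure C = C ∨
      ∃ f ∈ M.closure C \ C, DoubleCircuit M (C ∪ {f}) ∧
        ∃ P, DCPartition M (C ∪ {f}) P ∧ P.ncard = 3) :
    TropicalBasis M {C | Circuit M C ∧ M.closure C = C} := by
  refine ⟨fun C hC => hC.1, fun X hX hne => ?_⟩
  have hS : {n | ∃ C, Circuit M C ∧ (C \ X).ncard = 1 ∧ C.ncard = n}.Nonempty := by
    obtain ⟨C, e, hC, heX, hCX⟩ := exists_circuit_of_not_closed hX hne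
    exact ⟨C.ncard, C, hC, by rw [hCX]; simp, rfl⟩
  obtain ⟨C, hC, hC1, hCn⟩ := Nat.sInf_mem hS
  have hmin : ∀ C', Circuit M C' → (C' \ X).ncard = 1 → C.ncard ≤ C'.ncard := fun C' h1 h2 =>
    hCn ▸ Nat.sInf_le ⟨C', h1, h2, rfl⟩
  refine ⟨C, ⟨hC, ?_⟩, hC1⟩
  by_contra hcl
  rcases h C hC with hcl' | ⟨f, hf, _, P, hP, hP3⟩
  · exact hcl hcl'
  obtain ⟨hPne, hPsub, hPdisj, hPun, hPiff⟩ := hP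
  have hfC : f ∉ C := hf.2
  obtain ⟨p, hpP, hpC⟩ := (hPiff C).mp ⟨hC, subset_union_left⟩
  have hpf : p = {f} := by
    have hsub : p ⊆ {f} := by
      intro x hx
      rcases hPsub p hpP hx with hxC | hxf
      · exact absurd hx (hpC ▸ hxC : x ∈ (C ∪ {f}) \ p).2
      · exact hxf
    exact ((hPne p hpP).subset_singleton_iff).mp hsub
  subst hpf
  obtain ⟨p₂, p₃, hne23, hne2, hne3, hPeq⟩ := three_parts hP3 hpP
  have hp2P : p₂ ∈ P := by rw [hPeq]; simp
  have hp3P : p₃ ∈ P := by rw [hPeq]; simp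
  have hdisj23 : Disjoint p₂ p₃ := hPdisj hp2P hp3P hne23
  have hfp2 : f ∉ p₂ := by
    have := hPdisj hpP hp2P hne2
    exact (disjoint_singleton_left.mp this)
  have hfp3 : f ∉ p₃ := by
    have := hPdisj hpP hp3P hne3
    exact (disjoint_singleton_left.mp this)
  have hun : p₂ ∪ p₃ = C := by
    apply Subset.antisymm
    · intro x hx
      have hxD : x ∈ C ∪ {f} := by
        rw [← hPun]
        rcases hx with hx | hx
        · exact ⟨p₂, hp2P, hx⟩
        · exact ⟨p₃, hp3P, hx⟩
      rcases hxD with hxC | hxf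
      · exact hxC
      · rcases hx with hx | hx
        · exact absurd hx (hxf ▸ hfp2)
        · exact absurd hx (hxf ▸ hfp3)
    · intro x hx
      have hxD : x ∈ ⋃₀ P := by rw [hPun]; exact Or.inl hx
      obtain ⟨q, hqP, hxq⟩ := hxD
      rw [hPeq] at hqP
      rcases hqP with rfl | rfl | rfl
      · rw [mem_singleton_iff] at hxq
        exact absurd (hxq ▸ hx) hfC
      · exact Or.inl hxq
      · exact Or.inr hxq
  have hC2 : Circuit M ((C ∪ {f}) \ p₂) := ((hPiff _).mpr ⟨p₂, hp2P, rfl⟩).1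
  have hC3 : Circuit M ((C ∪ {f}) \ p₃) := ((hPiff _).mpr ⟨p₃, hp3P, rfl⟩).1
  obtain ⟨e, hCX⟩ := ncard_eq_one.mp hC1
  have heC : e ∈ C \ X := hCX ▸ rfl
  have hePP : e ∈ p₂ ∪ p₃ := hun ▸ heC.1
  rcases hePP with hep | hep
  · exact key hM hC hCX hmin hfC (hPne p₃ hp3P) hdisj23 hun hep hC2 hC3
  · exact key hM hC hCX hmin hfC (hPne p₂ hp2P)
      hdisj23.symm (by rw [union_comm]; exact hun) hep hC3 hC2

/-- Any circuit with exactly one element outside `C \ {e}` equals `C`, for `C` a closed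
circuit. -/
lemma circuit_eq_of_diff {C C' : Set α} {e : α} (hC : Circuit M C) (hcl : M.closure C = C)
    (he : e ∈ C) (hC' : Circuit M C') (h1 : (C' \ (C \ {e})).ncard = 1) : C' = C := by
  obtain ⟨g, hg⟩ := ncard_eq_one.mp h1
  have hclX : M.closure (C \ {e}) = C := by rw [hC.closure_diff_singleton he, hcl]
  have hgmem : g ∈ C' \ (C \ {e}) := hg ▸ rfl
  have hsub : C' \ {g} ⊆ C \ {e} := by
    intro x hx
    by_contra hxX
    have : x ∈ C' \ (C \ {e}) := ⟨hx.1, hxX⟩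
    rw [hg] at this
    exact hx.2 this
  have hgcl : g ∈ M.closure (C \ {e}) :=
    M.closure_subset_closure hsub (hC'.mem_closure_diff_singleton hgmem.1)
  have hgC : g ∈ C := hclX ▸ hgcl
  have hsubC : C' ⊆ C := by
    intro x hx
    by_cases hxg : x = g
    · exact hxg ▸ hgC
    · exact (hsub ⟨hx, hxg⟩).1
  exact hC.eq_of_dep_subset hC'.dep hsubC

/-- Every tropical basis contains every closed circuit. -/
lemma closed_mem_tb {B : Set (Set α)} (hB : TropicalBasis M B) {C : Set α}
    (hC : Circuit M C) (hcl : M.closure C = C) : C ∈ B := by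
  obtain ⟨e, he⟩ := hC.dep.nonempty
  have hXE : C \ {e} ⊆ M.E := diff_subset.trans hC.subset_ground
  have hclne : M.closure (C \ {e}) ≠ C \ {e} := by
    rw [hC.closure_diff_singleton he, hcl]
    intro h'
    have he' := he
    rw [h'] at he'
    exact he'.2 rfl
  obtain ⟨C', hC'B, hC'1⟩ := hB.2 _ hXE hclne
  have := circuit_eq_of_diff hC hcl he (hB.1 C' hC'B) hC'1
  exact this ▸ hC'B

end Aux

theorem stmt7 (M : Matroid α) [M.Finite] (hM : Simple M)
    (h : ∀ C, Circuit M C → M.closure C = C ∨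
      ∃ f ∈ M.closure C \ C, DoubleCircuit M (C ∪ {f}) ∧
        ∃ P, DCPartition M (C ∪ {f}) P ∧ P.ncard = 3) :
    ∀ B, MinimalTropicalBasis M B ↔ B = {C | Circuit M C ∧ M.closure C = C} := by
  have hTB := closed_tb hM h
  intro B
  constructor
  · rintro ⟨hB, hBmin⟩
    apply Subset.antisymm
    · by_contra hsub
      obtain ⟨C, hCB, hCB0⟩ := not_subset.mp hsub
      apply hBmin C hCB
      refine ⟨fun C' hC' => hB.1 C' hC'.1, fun X hX hne => ?_⟩
      obtain ⟨C'', hC''B0, hC''1⟩ := hTB.2 X hX hne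
      refine ⟨C'', ⟨closed_mem_tb hB hC''B0.1 hC''B0.2, ?_⟩, hC''1⟩
      intro hC''C
      rw [mem_singleton_iff] at hC''C
      exact hCB0 (hC''C ▸ hC''B0)
    · intro C hC
      exact closed_mem_tb hB hC.1 hC.2
  · rintro rfl
    refine ⟨hTB, fun C hC hTB' => ?_⟩
    obtain ⟨e, he⟩ := hC.1.dep.nonempty
    have hXE : C \ {e} ⊆ M.E := diff_subset.trans hC.1.subset_ground
    have hclne : M.closure (C \ {e}) ≠ C \ {e} := by
      rw [hC.1.closure_diff_singleton he, hC.2]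
      intro h'
      have he' := he
      rw [h'] at he'
      exact he'.2 rfl
    obtain ⟨C', hC'B, hC'1⟩ := hTB'.2 _ hXE hclne
    have := circuit_eq_of_diff hC.1 hC.2 he (hTB'.1 C' hC'B) hC'1
    exact hC'B.2 (mem_singleton_iff.mpr this)
end TropicalPaper
end

section
/- If a simple matroid M has a minimal tropical basis 𝒞' containing a circuit C with cl(C) ≠ C, then M has another minimal tropical basis distinct from 𝒞'; in particular, the minimal tropical basis is not unique. -/
open Set

namespace TropicalPaper

variable {α : Type*}

lemma circuit_diff_indep {M : Matroid α} {C : Set α} (h : Circuit M C) {x : α} (hx : x ∈ C) :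
    M.Indep (C \ {x}) := by
  by_contra hind
  have hdep : M.Dep (C \ {x}) :=
    (M.not_indep_iff (diff_subset.trans h.prop.subset_ground)).mp hind
  have hsub : C ⊆ C \ {x} := h.2 hdep diff_subset
  exact ((hsub hx).2 rfl)

lemma circuit_mem_closure_diff {M : Matroid α} {C : Set α} (h : Circuit M C) {x : α}
    (hx : x ∈ C) : x ∈ M.closure (C \ {x}) := by
  have hI := circuit_diff_indep h hx
  have hd : M.Dep (insert x (C \ {x})) := by
    rw [insert_diff_singleton, insert_eq_self.2 hx]; exact h.prop
  exact (hI.insert_dep_iff.mp hd).1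

lemma circuit_closure_diff {M : Matroid α} {C : Set α} (h : Circuit M C) {x : α} (hx : x ∈ C) :
    M.closure C ⊆ M.closure (C \ {x}) := by
  refine M.closure_subset_closure_of_subset_closure (fun y hy => ?_)
  by_cases hyx : y = x
  · rw [hyx]; exact circuit_mem_closure_diff h hx
  · exact M.subset_closure _ (diff_subset.trans h.prop.subset_ground) ⟨hy, hyx⟩

lemma exists_circuit_subset_s12 {M : Matroid α} [M.Finite] {X : Set α} (hX : M.Dep X) :
    ∃ C, C ⊆ X ∧ Circuit M C := by
  have hfin := M.set_finite X hX.subset_ground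
  set S := {n : ℕ | ∃ D, D ⊆ X ∧ M.Dep D ∧ D.ncard = n} with hS
  have hne : S.Nonempty := ⟨X.ncard, X, Subset.rfl, hX, rfl⟩
  obtain ⟨D, hDX, hD, hcard⟩ := Nat.sInf_mem hne
  refine ⟨D, hDX, hD, fun D' hD' hsub => ?_⟩
  have h1 : sInf S ≤ D'.ncard := Nat.sInf_le ⟨D', hsub.trans hDX, hD', rfl⟩
  exact (eq_of_subset_of_ncard_le hsub (hcard ▸ h1) (hfin.subset hDX)).symm.subset

lemma exists_fund_circuit {M : Matroid α} [M.Finite] {I : Set α} {e : α} (hI : M.Indep I)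
    (he : e ∈ M.closure I) (heI : e ∉ I) :
    ∃ C, Circuit M C ∧ C ⊆ insert e I ∧ e ∈ C := by
  have hd : M.Dep (insert e I) := hI.insert_dep_iff.mpr ⟨he, heI⟩
  obtain ⟨C, hCs, hC⟩ := exists_circuit_subset_s12 hd
  refine ⟨C, hC, hCs, ?_⟩
  by_contra heC
  have hsub : C ⊆ I := fun y hy => ((hCs hy).resolve_left (fun h => heC (h ▸ hy)))
  exact (M.not_indep_iff hC.prop.subset_ground).mpr hC.prop (hI.subset hsub)

lemma circuit_exists_ne {M : Matroid α} (hM : Simple M) {C : Set α} (hC : Circuit M C) (e : α) :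
    ∃ x ∈ C, x ≠ e := by
  by_contra h
  push_neg at h
  have hsub : C ⊆ {e} := fun x hx => h x hx
  have h3 := hM C hC
  have h1 : C.ncard ≤ 1 := by
    simpa using ncard_le_ncard hsub (finite_singleton e)
  omega

/-- Key lemma: circuit through both `e` and `c` inside `C ∪ {e}`. -/
lemma exists_circuit_both {M : Matroid α} [M.Finite] (hM : Simple M) {C : Set α}
    (hC : Circuit M C) {e c : α} (he : e ∈ M.closure C) (heC : e ∉ C) (hc : c ∈ C) :
    ∃ C₂, Circuit M C₂ ∧ C₂ ⊆ C ∪ {e} ∧ e ∈ C₂ ∧ c ∈ C₂ := by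
  have hCE : C ⊆ M.E := hC.prop.subset_ground
  have hIc : M.Indep (C \ {c}) := circuit_diff_indep hC hc
  have hecl : e ∈ M.closure (C \ {c}) := circuit_closure_diff hC hc he
  have hec : e ≠ c := fun h => heC (h ▸ hc)
  obtain ⟨C₁, hC₁, hC₁s, heC₁⟩ := exists_fund_circuit hIc hecl (fun h => heC h.1)
  obtain ⟨x, hxC₁, hxe⟩ := circuit_exists_ne hM hC₁ e
  have hxCc : x ∈ C \ {c} := (hC₁s hxC₁).resolve_left hxe
  have hJindep : M.Indep (insert e ((C \ {c}) \ {x})) := by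
    have hI2 : M.Indep ((C \ {c}) \ {x}) := hIc.subset diff_subset
    rw [hI2.insert_indep_iff_of_notMem (fun h => heC h.1.1)]
    refine ⟨M.mem_ground_of_mem_closure he, fun hecl2 => ?_⟩
    -- derive x ∈ closure (C\{c}\{x}), contradicting independence of C\{c}
    have hx1 : x ∈ M.closure (C₁ \ {x}) := circuit_mem_closure_diff hC₁ hxC₁
    have hsub1 : C₁ \ {x} ⊆ M.closure ((C \ {c}) \ {x}) := by
      intro y hy
      rcases hC₁s hy.1 with hye | hyC
      · exact hye ▸ hecl2
      · exact M.subset_closure _ ((diff_subset.trans diff_subset).trans hCE) ⟨hyC, hy.2⟩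
    have hx2 : x ∈ M.closure ((C \ {c}) \ {x}) :=
      M.closure_closure _ ▸ (M.closure_subset_closure hsub1 hx1)
    have : M.Indep (insert x ((C \ {c}) \ {x})) := by
      rwa [insert_diff_singleton, insert_eq_self.2 hxCc]
    rw [hI2.insert_indep_iff_of_notMem (fun h => h.2 rfl)] at this
    exact this.2 hx2
  -- c ∈ closure J
  have hccl : c ∈ M.closure (insert e ((C \ {c}) \ {x})) := by
    have hsub2 : C \ {c} ⊆ M.closure (insert e ((C \ {c}) \ {x})) := by
      intro y hy
      by_cases hyx : y = x
      · rw [hyx]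
        have hx1 : x ∈ M.closure (C₁ \ {x}) := circuit_mem_closure_diff hC₁ hxC₁
        refine M.closure_subset_closure (fun z hz => ?_) hx1
        rcases hC₁s hz.1 with hze | hzC
        · exact hze ▸ mem_insert _ _
        · exact mem_insert_of_mem _ ⟨hzC, hz.2⟩
      · exact M.subset_closure _ (insert_subset (M.mem_ground_of_mem_closure he)
          ((diff_subset.trans diff_subset).trans hCE)) (mem_insert_of_mem _ ⟨hy, hyx⟩)
    have hc1 : c ∈ M.closure (C \ {c}) := circuit_mem_closure_diff hC hc
    exact M.closure_closure _ ▸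
      ((M.closure_subset_closure_of_subset_closure hsub2) hc1)
  obtain ⟨C₂, hC₂, hC₂s, hcC₂⟩ := exists_fund_circuit hJindep hccl
    (fun h => by rcases h with h | h; exact hec h.symm; exact h.1.2 rfl)
  have heC₂ : e ∈ C₂ := by
    by_contra heC₂
    have hsub3 : C₂ ⊆ C \ {x} := by
      intro y hy
      rcases hC₂s hy with hyc | hy2
      · exact hyc ▸ ⟨hc, fun h => (hxCc.2 (h ▸ rfl)).elim⟩
      · rcases hy2 with hye | hy3
        · exact absurd (hye ▸ hy) heC₂
        · exact ⟨hy3.1.1, hy3.2⟩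
    exact (M.not_indep_iff hC₂.prop.subset_ground).mpr hC₂.prop
      ((circuit_diff_indep hC hxCc.1).subset hsub3)
  refine ⟨C₂, hC₂, ?_, heC₂, hcC₂⟩
  intro y hy
  rcases hC₂s hy with hyc | hy2
  · exact Or.inl (hyc ▸ hc)
  · rcases hy2 with hye | hy3
    · exact Or.inr hye
    · exact Or.inl hy3.1.1

theorem stmt12 (M : Matroid α) [M.Finite] (hM : Simple M)
    (𝒞' : Set (Set α)) (h𝒞' : MinimalTropicalBasis M 𝒞')
    (C : Set α) (hC : C ∈ 𝒞') (hcl : M.closure C ≠ C) :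
    ∃ B, MinimalTropicalBasis M B ∧ B ≠ 𝒞' := by
  obtain ⟨htb, -⟩ := h𝒞'
  have hCcirc : Circuit M C := htb.1 C hC
  have hCE : C ⊆ M.E := hCcirc.prop.subset_ground
  obtain ⟨e, hecl, heC⟩ : ∃ e, e ∈ M.closure C ∧ e ∉ C := by
    by_contra h
    push_neg at h
    exact hcl (subset_antisymm (fun y hy => h y hy) (M.subset_closure C hCE))
  set 𝒞'' : Set (Set α) := (𝒞' \ {C}) ∪ {C' | Circuit M C' ∧ C' ⊆ C ∪ {e} ∧ e ∈ C'}
    with h𝒞''def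
  have hCnot : C ∉ 𝒞'' := by
    rintro (⟨-, hne⟩ | ⟨-, -, he'⟩)
    · exact hne rfl
    · exact heC he'
  have htb'' : TropicalBasis M 𝒞'' := by
    constructor
    · rintro D (⟨hD, -⟩ | hD)
      · exact htb.1 D hD
      · exact hD.1
    · intro X hXE hXcl
      obtain ⟨D, hD, hcard⟩ := htb.2 X hXE hXcl
      by_cases hDC : D = C
      · subst hDC
        obtain ⟨c, hc⟩ := ncard_eq_one.mp hcard
        have hcd : c ∈ D \ X := by rw [hc]; exact rfl
        have hCX : D \ {c} ⊆ X := by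
          rintro y ⟨hy1, hy2⟩
          by_contra hyX
          have : y ∈ D \ X := ⟨hy1, hyX⟩
          rw [hc] at this
          exact hy2 this
        by_cases heX : e ∈ X
        · obtain ⟨C₂, hC₂, hsub, heC₂, hcC₂⟩ :=
            exists_circuit_both hM hCcirc hecl heC hcd.1
          refine ⟨C₂, Or.inr ⟨hC₂, hsub, heC₂⟩, ?_⟩
          have hset : C₂ \ X = {c} := by
            apply subset_antisymm
            · rintro y ⟨hy, hyX⟩
              rcases hsub hy with hyC | hye
              · have : y ∈ D \ X := ⟨hyC, hyX⟩
                rw [hc] at this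
                exact this
              · rw [mem_singleton_iff] at hye
                exact absurd (hye ▸ heX) hyX
            · rintro y hy
              rw [mem_singleton_iff] at hy
              subst hy
              exact ⟨hcC₂, hcd.2⟩
          rw [hset, ncard_singleton]
        · have hIc := circuit_diff_indep hCcirc hcd.1
          have he2 : e ∈ M.closure (D \ {c}) := circuit_closure_diff hCcirc hcd.1 hecl
          obtain ⟨C₁, hC₁, hsub, heC₁⟩ := exists_fund_circuit hIc he2 (fun h => heC h.1)
          refine ⟨C₁, Or.inr ⟨hC₁, ?_, heC₁⟩, ?_⟩
          · intro y hy
            rcases hsub hy with hye | hyC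
            · exact Or.inr hye
            · exact Or.inl hyC.1
          · have hset : C₁ \ X = {e} := by
              apply subset_antisymm
              · rintro y ⟨hy, hyX⟩
                rcases hsub hy with hye | hyC
                · exact hye
                · exact absurd (hCX hyC) hyX
              · rintro y hy
                rw [mem_singleton_iff] at hy
                subst hy
                exact ⟨heC₁, heX⟩
            rw [hset, ncard_singleton]
      · exact ⟨D, Or.inl ⟨hD, hDC⟩, hcard⟩
  have h𝒞''fin : 𝒞''.Finite := by
    apply M.ground_finite.finite_subsets.subset
    rintro D (⟨hD, -⟩ | hD)
    · exact (htb.1 D hD).prop.subset_ground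
    · exact hD.1.prop.subset_ground
  set S := {n : ℕ | ∃ B, B ⊆ 𝒞'' ∧ TropicalBasis M B ∧ B.ncard = n} with hS
  have hne : S.Nonempty := ⟨𝒞''.ncard, 𝒞'', Subset.rfl, htb'', rfl⟩
  obtain ⟨B, hB𝒞, hBtb, hBcard⟩ := Nat.sInf_mem hne
  have hBfin : B.Finite := h𝒞''fin.subset hB𝒞
  refine ⟨B, ⟨hBtb, fun D hD htbD => ?_⟩, fun hEq => ?_⟩
  · have h1 : sInf S ≤ (B \ {D}).ncard :=
      Nat.sInf_le ⟨B \ {D}, diff_subset.trans hB𝒞, htbD, rfl⟩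
    have h2 := ncard_diff_singleton_lt_of_mem hD hBfin
    omega
  · exact hCnot (hB𝒞 (hEq ▸ hC))
end TropicalPaper
end
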